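/- arXiv:1012.1497 — 2 statements merged into one kernel-verified Lean document; each statement's English description precedes it below -/
import Mathlib

section
/- Assume κ⁰ > 0, κ¹ > 0 and that the pair is nondegenerate. Then the set of zeros in (0,∞) of the strictly increasing functions σ_{i,j} (those with ρ¹_j < κ¹/(m−1)) is bounded above and has no accumulation point other than 0, while the set of zeros of the strictly decreasing functions σ_{i,j} (those with ρ¹_j > κ¹/(m−1)) is bounded away from 0 and has no accumulation point other than +∞. Consequently there exist 0 < a ≤ b such that every degeneracy instant λ ∈ Λ with λ < a is a zero only of strictly increasing functions σ_{i,j}, and every λ ∈ Λ with λ > b is a zero only of strictly decreasing functions σ_{i,j}. -/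
/-!
Multiplying `σ_{i,j}(λ) = 0` by `λ` turns it into the affine equation `u_i λ + v_j = 0` with
`u_i = ρ⁰_i - κ⁰/(m-1)` and `v_j = ρ¹_j - κ¹/(m-1)`, two sequences tending to `+∞`. A zero with
`v_j < 0` forces `u_i > 0`, and if it lies in `[δ, ∞)` then `u_i δ ≤ -v_j ≤ -inf v`, which leaves
finitely many `i` and finitely many `j`, hence finitely many zeros there; this gives both the upper
bound and the isolation of the increasing zeros. The substitution `λ ↦ 1/λ` exchanges the roles of
`u` and `v` and turns the decreasing zeros into increasing ones. Nondegeneracy rules out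
`u_i = v_j = 0`, the only way a zero can have `v_j = 0`, so a degeneracy instant below the
decreasing zeros (above the increasing ones) is a zero of increasing (decreasing) functions only.
-/

open Filter Set Topology

def negInterceptRoots (u v : ℕ → ℝ) : Set ℝ :=
  {l | 0 < l ∧ ∃ i j, v j < 0 ∧ u i * l + v j = 0}

lemma finite_setOf_le_of_tendsto_atTop {α : Type*} [LinearOrder α] [NoMaxOrder α] {u : ℕ → α}
    (hu : Tendsto u atTop atTop) (C : α) : {i | u i ≤ C}.Finite := by
  have h := hu.eventually_gt_atTop C
  rw [← Nat.cofinite_eq_atTop, eventually_cofinite] at h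
  simpa only [not_lt] using h

lemma tendsto_atTop_sub_const_of_strictMonoOn_Ici {ρ : ℕ → ℝ} {n : ℕ}
    (hmono : StrictMonoOn ρ (Ici n)) (hunb : ∀ C, ∃ i, n ≤ i ∧ C < ρ i) (c : ℝ) :
    Tendsto (fun i => ρ i - c) atTop atTop := by
  refine tendsto_atTop_atTop.2 fun C => ?_
  obtain ⟨i, hi, hCi⟩ := hunb (C + c)
  refine ⟨i, fun k hik => ?_⟩
  linarith [hmono.monotoneOn hi (hi.trans hik) hik]

lemma eq_of_apply_eq_of_first_le {α β : Type*} [LinearOrder α] [Preorder β] {ρ : α → β}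
    {s : Set α} {k i : α} {c : β} (hmono : StrictMonoOn ρ s) (hk : k ∈ s) (hck : c ≤ ρ k)
    (hbefore : ∀ i ∈ s, i < k → ρ i < c) (hi : i ∈ s) (hρi : ρ i = c) : i = k := by
  have hik : i ≤ k := (hmono.le_iff_le hi hk).1 (hρi.trans_le hck)
  exact hik.eq_of_not_lt fun hlt => (hbefore i hi hlt).ne hρi

lemma exists_pos_le_abs_sub_of_finite_inter {Z K : Set ℝ} {x : ℝ} (hK : K ∈ 𝓝 x)
    (hZK : (Z ∩ K).Finite) : ∃ ε > 0, ∀ l ∈ Z, l ≠ x → ε ≤ |l - x| := by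
  have hx : ((Z ∩ K) \ {x})ᶜ ∈ 𝓝 x :=
    (hZK.sdiff.isClosed.isOpen_compl).mem_nhds fun hx => hx.2 rfl
  obtain ⟨ε, hε, hball⟩ := Metric.mem_nhds_iff.1 (inter_mem hK hx)
  refine ⟨ε, hε, fun l hlZ hlx => not_lt.1 fun hlt => ?_⟩
  have hl := hball (Metric.mem_ball.2 (by rwa [Real.dist_eq]))
  exact hl.2 ⟨⟨hlZ, hl.1⟩, hlx⟩

section negInterceptRoots

variable {u v : ℕ → ℝ} (hu : Tendsto u atTop atTop) (hv : Tendsto v atTop atTop)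
include hu hv

lemma finite_negInterceptRoots_inter_Ici {δ : ℝ} (hδ : 0 < δ) :
    (negInterceptRoots u v ∩ Ici δ).Finite := by
  obtain ⟨K, hK⟩ := bddBelow_range_of_tendsto_atTop_atTop hv
  have hI := finite_setOf_le_of_tendsto_atTop hu (-K / δ)
  have hJ := finite_setOf_le_of_tendsto_atTop hv 0
  refine ((hI.prod hJ).image fun p => -v p.2 / u p.1).subset ?_
  rintro l ⟨⟨hl, i, j, hvj, hroot⟩, hδl⟩
  have hui : 0 < u i := pos_of_mul_pos_left (by linarith) hl.le
  have huiδ : u i * δ ≤ -K := by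
    nlinarith [mul_le_mul_of_nonneg_left (mem_Ici.1 hδl) hui.le, hK (mem_range_self j)]
  refine ⟨(i, j), ⟨(le_div_iff₀ hδ).2 huiδ, hvj.le⟩, ?_⟩
  rw [div_eq_iff hui.ne']
  linarith

lemma bddAbove_negInterceptRoots : BddAbove (negInterceptRoots u v) :=
  (((finite_negInterceptRoots_inter_Ici hu hv one_pos).bddAbove).union bddAbove_Iio).mono
    fun l hl => (le_or_gt 1 l).imp (fun h => ⟨hl, h⟩) id

lemma finite_inv_negInterceptRoots_inter_Iic {R : ℝ} (hR : 0 < R) :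
    ((negInterceptRoots u v)⁻¹ ∩ Iic R).Finite := by
  refine (finite_negInterceptRoots_inter_Ici hu hv (inv_pos.2 hR)).inv.subset ?_
  rintro l ⟨hl, hlR⟩
  have hl₀ : 0 < l := inv_pos.1 hl.1
  exact ⟨hl, inv_anti₀ hl₀ hlR⟩

lemma exists_pos_le_of_mem_inv_negInterceptRoots :
    ∃ c > 0, ∀ l ∈ (negInterceptRoots u v)⁻¹, c ≤ l := by
  obtain ⟨B, hB⟩ := bddAbove_negInterceptRoots hu hv
  refine ⟨(max B 1)⁻¹, by positivity, fun l hl => ?_⟩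
  have hl₀ : 0 < l := inv_pos.1 hl.1
  exact inv_le_of_inv_le₀ hl₀ ((hB hl).trans (le_max_left B 1))

lemma exists_pos_le_abs_sub_of_subset_negInterceptRoots {Z : Set ℝ}
    (hZ : Z ⊆ negInterceptRoots u v) {x : ℝ} (hx : 0 < x) :
    ∃ ε > 0, ∀ l ∈ Z, l ≠ x → ε ≤ |l - x| :=
  exists_pos_le_abs_sub_of_finite_inter (Ici_mem_nhds (half_lt_self hx))
    ((finite_negInterceptRoots_inter_Ici hu hv (half_pos hx)).subset
      (inter_subset_inter_left _ hZ))

lemma exists_pos_le_abs_sub_of_subset_inv_negInterceptRoots {Z : Set ℝ}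
    (hZ : Z ⊆ (negInterceptRoots u v)⁻¹) {x : ℝ} (hx : 0 < x) :
    ∃ ε > 0, ∀ l ∈ Z, l ≠ x → ε ≤ |l - x| :=
  exists_pos_le_abs_sub_of_finite_inter (Iic_mem_nhds (lt_two_mul_self hx))
    ((finite_inv_negInterceptRoots_inter_Iic hu hv (by positivity)).subset
      (inter_subset_inter_left _ hZ))

end negInterceptRoots

lemma mem_inv_negInterceptRoots_of_root {u v : ℕ → ℝ} {i j : ℕ} {l : ℝ} (hl : 0 < l)
    (hvj : 0 < v j) (hroot : u i * l + v j = 0) : l ∈ (negInterceptRoots v u)⁻¹ := by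
  refine ⟨inv_pos.2 hl, j, i, by nlinarith, ?_⟩
  field_simp
  linarith

lemma sub_div_mul_add_sub_div_eq_zero {l p q r s d : ℝ} (hl : l ≠ 0)
    (h : p + q / l - (r + s / l) / d = 0) : (p - r / d) * l + (q - s / d) = 0 := by
  calc (p - r / d) * l + (q - s / d) = l * (p + q / l - (r + s / l) / d) := by
        rw [add_div]
        field_simp
        ring
    _ = 0 := by rw [h, mul_zero]

theorem stmt_8_general
    (m : ℕ)
    (κ₀ κ₁ : ℝ)
    (ρ₀ ρ₁ : ℕ → ℝ)
    (hρ₀mono : ∀ i j : ℕ, 1 ≤ i → i < j → ρ₀ i < ρ₀ j)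
    (hρ₁mono : ∀ i j : ℕ, 1 ≤ i → i < j → ρ₁ i < ρ₁ j)
    (hρ₀unb : ∀ C : ℝ, ∃ i : ℕ, 1 ≤ i ∧ C < ρ₀ i)
    (hρ₁unb : ∀ C : ℝ, ∃ j : ℕ, 1 ≤ j ∧ C < ρ₁ j)
    (σ : ℕ → ℕ → ℝ → ℝ)
    (hσ : ∀ (i j : ℕ) (l : ℝ), 0 < l →
      σ i j l = ρ₀ i + ρ₁ j / l - (κ₀ + κ₁ / l) / ((m : ℝ) - 1))
    (istar jstar : ℕ)
    (histar1 : 1 ≤ istar) (histar2 : κ₀ / ((m : ℝ) - 1) ≤ ρ₀ istar)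
    (histar3 : ∀ i : ℕ, 1 ≤ i → i < istar → ρ₀ i < κ₀ / ((m : ℝ) - 1))
    (hjstar1 : 1 ≤ jstar) (hjstar2 : κ₁ / ((m : ℝ) - 1) ≤ ρ₁ jstar)
    (hjstar3 : ∀ j : ℕ, 1 ≤ j → j < jstar → ρ₁ j < κ₁ / ((m : ℝ) - 1))
    (hnondeg : ¬ (ρ₀ istar = κ₀ / ((m : ℝ) - 1) ∧ ρ₁ jstar = κ₁ / ((m : ℝ) - 1)))
    (Λ : Set ℝ)
    (hΛ : Λ = {l : ℝ | 0 < l ∧ ∃ i j : ℕ, 1 ≤ i ∧ 1 ≤ j ∧ (i, j) ≠ (1, 1) ∧ σ i j l = 0})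
    (Zinc Zdec : Set ℝ)
    (hZinc : Zinc = {l : ℝ | 0 < l ∧ ∃ i j : ℕ, 1 ≤ i ∧ 1 ≤ j ∧
      ρ₁ j < κ₁ / ((m : ℝ) - 1) ∧ σ i j l = 0})
    (hZdec : Zdec = {l : ℝ | 0 < l ∧ ∃ i j : ℕ, 1 ≤ i ∧ 1 ≤ j ∧
      κ₁ / ((m : ℝ) - 1) < ρ₁ j ∧ σ i j l = 0}) :
    BddAbove Zinc ∧
    (∀ x : ℝ, 0 < x → ∃ ε > (0 : ℝ), ∀ l ∈ Zinc, l ≠ x → ε ≤ |l - x|) ∧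
    (∃ c > (0 : ℝ), ∀ l ∈ Zdec, c ≤ l) ∧
    (∀ x : ℝ, 0 < x → ∃ ε > (0 : ℝ), ∀ l ∈ Zdec, l ≠ x → ε ≤ |l - x|) ∧
    (∃ a b : ℝ, 0 < a ∧ a ≤ b ∧
      (∀ l ∈ Λ, l < a → ∀ i j : ℕ, 1 ≤ i → 1 ≤ j → (i, j) ≠ (1, 1) →
        σ i j l = 0 → ρ₁ j < κ₁ / ((m : ℝ) - 1)) ∧
      (∀ l ∈ Λ, b < l → ∀ i j : ℕ, 1 ≤ i → 1 ≤ j → (i, j) ≠ (1, 1) →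
        σ i j l = 0 → κ₁ / ((m : ℝ) - 1) < ρ₁ j)) := by
  set c₀ := κ₀ / ((m : ℝ) - 1)
  set c₁ := κ₁ / ((m : ℝ) - 1)
  have hρ₀ : StrictMonoOn ρ₀ (Ici 1) := fun i hi j _ hij => hρ₀mono i j hi hij
  have hρ₁ : StrictMonoOn ρ₁ (Ici 1) := fun i hi j _ hij => hρ₁mono i j hi hij
  set u : ℕ → ℝ := fun i => ρ₀ i - c₀
  set v : ℕ → ℝ := fun j => ρ₁ j - c₁
  have hu : Tendsto u atTop atTop := tendsto_atTop_sub_const_of_strictMonoOn_Ici hρ₀ hρ₀unb c₀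
  have hv : Tendsto v atTop atTop := tendsto_atTop_sub_const_of_strictMonoOn_Ici hρ₁ hρ₁unb c₁
  have hroot : ∀ i j l, 0 < l → σ i j l = 0 → u i * l + v j = 0 :=
    fun i j l hl hσ0 => sub_div_mul_add_sub_div_eq_zero hl.ne' ((hσ i j l hl).symm.trans hσ0)
  have hinc : Zinc ⊆ negInterceptRoots u v := by
    rw [hZinc]
    rintro l ⟨hl, i, j, -, -, hj, hσ0⟩
    exact ⟨hl, i, j, sub_neg.2 hj, hroot i j l hl hσ0⟩
  have hdec : Zdec ⊆ (negInterceptRoots v u)⁻¹ := by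
    rw [hZdec]
    rintro l ⟨hl, i, j, -, -, hj, hσ0⟩
    exact mem_inv_negInterceptRoots_of_root hl (sub_pos.2 hj) (hroot i j l hl hσ0)
  have hmid : ∀ i j l, 1 ≤ i → 1 ≤ j → 0 < l → σ i j l = 0 → ρ₁ j ≠ c₁ := by
    intro i j l hi hj hl hσ0 hρ₁j
    have hρ₀i : ρ₀ i = c₀ := by simpa [u, v, hρ₁j, hl.ne', sub_eq_zero] using hroot i j l hl hσ0
    obtain rfl := eq_of_apply_eq_of_first_le hρ₀ histar1 histar2 histar3 hi hρ₀i
    obtain rfl := eq_of_apply_eq_of_first_le hρ₁ hjstar1 hjstar2 hjstar3 hj hρ₁j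
    exact hnondeg ⟨hρ₀i, hρ₁j⟩
  obtain ⟨B, hB⟩ := (bddAbove_negInterceptRoots hu hv).mono hinc
  obtain ⟨a, ha, haZ⟩ := exists_pos_le_of_mem_inv_negInterceptRoots hv hu
  refine ⟨⟨B, hB⟩, fun x => exists_pos_le_abs_sub_of_subset_negInterceptRoots hu hv hinc,
    ⟨a, ha, fun l hl => haZ l (hdec hl)⟩,
    fun x => exists_pos_le_abs_sub_of_subset_inv_negInterceptRoots hv hu hdec,
    a, max a B, ha, le_max_left a B, ?_, ?_⟩
  · rw [hΛ]
    rintro l ⟨hl, -⟩ hla i j hi hj - hσ0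
    by_contra! h
    have hl_dec : l ∈ Zdec := hZdec ▸ ⟨hl, i, j, hi, hj, h.lt_of_ne' (hmid i j l hi hj hl hσ0), hσ0⟩
    exact hla.not_ge (haZ l (hdec hl_dec))
  · rw [hΛ]
    rintro l ⟨hl, -⟩ hbl i j hi hj - hσ0
    by_contra! h
    have hl_inc : l ∈ Zinc := hZinc ▸ ⟨hl, i, j, hi, hj, h.lt_of_ne (hmid i j l hi hj hl hσ0), hσ0⟩
    exact (hbl.trans_le' (le_max_right a B)).not_ge (hB hl_inc)

theorem stmt_8
    (m : ℕ) (hm : 3 ≤ m)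
    (κ₀ κ₁ : ℝ)
    (ρ₀ ρ₁ : ℕ → ℝ)
    (hρ₀one : ρ₀ 1 = 0) (hρ₁one : ρ₁ 1 = 0)
    (hρ₀mono : ∀ i j : ℕ, 1 ≤ i → i < j → ρ₀ i < ρ₀ j)
    (hρ₁mono : ∀ i j : ℕ, 1 ≤ i → i < j → ρ₁ i < ρ₁ j)
    (hρ₀unb : ∀ C : ℝ, ∃ i : ℕ, 1 ≤ i ∧ C < ρ₀ i)
    (hρ₁unb : ∀ C : ℝ, ∃ j : ℕ, 1 ≤ j ∧ C < ρ₁ j)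
    (σ : ℕ → ℕ → ℝ → ℝ)
    (hσ : ∀ (i j : ℕ) (l : ℝ), 0 < l →
      σ i j l = ρ₀ i + ρ₁ j / l - (κ₀ + κ₁ / l) / ((m : ℝ) - 1))
    (hκ₀ : 0 < κ₀) (hκ₁ : 0 < κ₁)
    (istar jstar : ℕ)
    (histar1 : 1 ≤ istar) (histar2 : κ₀ / ((m : ℝ) - 1) ≤ ρ₀ istar)
    (histar3 : ∀ i : ℕ, 1 ≤ i → i < istar → ρ₀ i < κ₀ / ((m : ℝ) - 1))
    (hjstar1 : 1 ≤ jstar) (hjstar2 : κ₁ / ((m : ℝ) - 1) ≤ ρ₁ jstar)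
    (hjstar3 : ∀ j : ℕ, 1 ≤ j → j < jstar → ρ₁ j < κ₁ / ((m : ℝ) - 1))
    (hnondeg : ¬ (ρ₀ istar = κ₀ / ((m : ℝ) - 1) ∧ ρ₁ jstar = κ₁ / ((m : ℝ) - 1)))
    (Λ : Set ℝ)
    (hΛ : Λ = {l : ℝ | 0 < l ∧ ∃ i j : ℕ, 1 ≤ i ∧ 1 ≤ j ∧ (i, j) ≠ (1, 1) ∧ σ i j l = 0})
    (Zinc Zdec : Set ℝ)
    (hZinc : Zinc = {l : ℝ | 0 < l ∧ ∃ i j : ℕ, 1 ≤ i ∧ 1 ≤ j ∧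
      ρ₁ j < κ₁ / ((m : ℝ) - 1) ∧ σ i j l = 0})
    (hZdec : Zdec = {l : ℝ | 0 < l ∧ ∃ i j : ℕ, 1 ≤ i ∧ 1 ≤ j ∧
      κ₁ / ((m : ℝ) - 1) < ρ₁ j ∧ σ i j l = 0}) :
    BddAbove Zinc ∧
    (∀ x : ℝ, 0 < x → ∃ ε > (0 : ℝ), ∀ l ∈ Zinc, l ≠ x → ε ≤ |l - x|) ∧
    (∃ c > (0 : ℝ), ∀ l ∈ Zdec, c ≤ l) ∧
    (∀ x : ℝ, 0 < x → ∃ ε > (0 : ℝ), ∀ l ∈ Zdec, l ≠ x → ε ≤ |l - x|) ∧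
    (∃ a b : ℝ, 0 < a ∧ a ≤ b ∧
      (∀ l ∈ Λ, l < a → ∀ i j : ℕ, 1 ≤ i → 1 ≤ j → (i, j) ≠ (1, 1) →
        σ i j l = 0 → ρ₁ j < κ₁ / ((m : ℝ) - 1)) ∧
      (∀ l ∈ Λ, b < l → ∀ i j : ℕ, 1 ≤ i → 1 ≤ j → (i, j) ≠ (1, 1) →
        σ i j l = 0 → κ₁ / ((m : ℝ) - 1) < ρ₁ j)) :=
  stmt_8_general m κ₀ κ₁ ρ₀ ρ₁ hρ₀mono hρ₁mono hρ₀unb hρ₁unb σ hσ istar jstar histar1 histar2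
    histar3 hjstar1 hjstar2 hjstar3 hnondeg Λ hΛ Zinc Zdec hZinc hZdec
end

section
/- Assume κ⁰ ≤ 0 < κ¹ and that the pair is nondegenerate. Then for indices (i,j) ≠ (1,1), the function σ_{i,j} has a zero in (0,∞) if and only if ρ⁰_i > κ⁰/(m−1) and ρ¹_j < κ¹/(m−1); moreover the degeneracy set Λ = { λ ∈ (0,∞) : σ_{i,j}(λ) = 0 for some (i,j) ≠ (1,1) } is infinite, bounded above, has no accumulation points in (0,∞), and its only accumulation point in [0,∞) is 0; equivalently, Λ is the range of a strictly decreasing sequence converging to 0. -/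
/-
For `λ > 0`, `λ σ_{i,j}(λ) = a_i λ - b_j` with `a_i = ρ⁰_i - κ⁰/(m-1)` and `b_j = κ¹/(m-1) - ρ¹_j`.
Since `κ⁰ ≤ 0` all `a_i` are nonnegative, and nondegeneracy rules out `a_i = b_j = 0`, so `σ_{i,j}`
has a zero iff `a_i > 0` and `b_j > 0`, namely `λ = b_j / a_i`. Only finitely many `b_j` are
positive, and `b_j / a_i ≥ x` forces `a_i ≤ b_j / x`, which by unboundedness of `ρ⁰` happens for
finitely many `i`: hence `Λ` meets every `[x, ∞)`, `x > 0`, in a finite set, while the zeros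
`b_1 / a_i`, `i ≥ 2`, make it infinite. A subset of `(0, ∞)` with these two properties is the range
of a strictly decreasing sequence tending to `0`: list its elements from the largest downwards.
-/

open Set Filter Topology

lemma eigenvalue_eq_zero_iff {M r₀ r₁ k₀ k₁ l : ℝ} (hM : M ≠ 0) (hl : l ≠ 0) :
    r₀ + r₁ / l - (k₀ + k₁ / l) / M = 0 ↔ (r₀ - k₀ / M) * l = k₁ / M - r₁ := by
  field_simp
  constructor <;> intro h <;> linarith

lemma exists_pos_mul_eq_iff {a b : ℝ} (ha : 0 ≤ a) (hab : ¬(a = 0 ∧ b = 0)) :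
    (∃ l : ℝ, 0 < l ∧ a * l = b) ↔ 0 < a ∧ 0 < b := by
  constructor
  · rintro ⟨l, hl, rfl⟩
    have ha' : 0 < a := ha.lt_of_ne' fun h => hab ⟨h, by simp [h]⟩
    exact ⟨ha', mul_pos ha' hl⟩
  · rintro ⟨ha', hb⟩
    exact ⟨b / a, div_pos hb ha', mul_div_cancel₀ b ha'.ne'⟩

lemma finite_setOf_le_of_monotoneOn {α : Type*} [LinearOrder α] {ρ : ℕ → α}
    (hρ : MonotoneOn ρ (Ici 1)) (hunb : ∀ C, ∃ i, 1 ≤ i ∧ C < ρ i) (C : α) :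
    {i | ρ i ≤ C}.Finite := by
  obtain ⟨N, hN, hCN⟩ := hunb C
  refine (finite_Iio N).subset fun i hi => show i < N from lt_of_not_ge fun hNi => ?_
  exact (hCN.trans_le (hρ hN (hN.trans hNi) hNi)).not_ge hi

lemma setOf_lt_subset_Iio {α : Type*} [LinearOrder α] {ρ : ℕ → α} {c : α} {k : ℕ}
    (hρ : MonotoneOn ρ (Ici 1)) (hk : 1 ≤ k) (hck : c ≤ ρ k) : {j | ρ j < c} ⊆ Iio k :=
  fun _ hj => lt_of_not_ge fun hkj => (hck.trans (hρ hk (hk.trans hkj) hkj)).not_gt hj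

lemma not_eq_and_eq_of_nondegenerate {ρ₀ ρ₁ : ℕ → ℝ} {c₀ c₁ : ℝ} {istar jstar i j : ℕ}
    (hρ₀ : MonotoneOn ρ₀ (Ici 1)) (hρ₀one : ρ₀ 1 = 0) (hc₀ : c₀ ≤ 0) (histar1 : 1 ≤ istar)
    (histar3 : ∀ i, 1 ≤ i → i < istar → ρ₀ i < c₀)
    (hρ₁ : MonotoneOn ρ₁ (Ici 1)) (hjstar1 : 1 ≤ jstar) (hjstar2 : c₁ ≤ ρ₁ jstar)
    (hjstar3 : ∀ j, 1 ≤ j → j < jstar → ρ₁ j < c₁)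
    (hnondeg : ¬(ρ₀ istar = c₀ ∧ ρ₁ jstar = c₁)) (hi : 1 ≤ i) (hj : 1 ≤ j) :
    ¬(ρ₀ i = c₀ ∧ ρ₁ j = c₁) := by
  rintro ⟨hρ₀i, hρ₁j⟩
  have hc₀ : c₀ = 0 := hc₀.antisymm (hρ₀i ▸ hρ₀one ▸ hρ₀ self_mem_Ici hi hi)
  have histar : istar = 1 :=
    (le_of_not_gt fun h => (histar3 1 le_rfl h).not_ge (by rw [hρ₀one, hc₀])).antisymm histar1
  have hjstar : c₁ < ρ₁ jstar :=
    hjstar2.lt_of_ne fun h => hnondeg ⟨by rw [histar, hρ₀one, hc₀], h.symm⟩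
  rcases lt_or_ge j jstar with hjs | hjs
  · exact (hjstar3 j hj hjs).ne hρ₁j
  · exact (hjstar.trans_le (hρ₁ hjstar1 hj hjs)).ne' hρ₁j

-- The paper's `Λ` for `a i = ρ⁰_i - κ⁰/(m-1)` and `b j = κ¹/(m-1) - ρ¹_j`.
def degeneracySet (a b : ℕ → ℝ) : Set ℝ :=
  {l | 0 < l ∧ ∃ i j, 1 ≤ i ∧ 1 ≤ j ∧ (i, j) ≠ (1, 1) ∧ a i * l = b j}

section degeneracySet

variable {a b : ℕ → ℝ}

lemma degeneracySet_inter_Ici_finite (ha₀ : ∀ i, 1 ≤ i → 0 ≤ a i)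
    (hab : ∀ i j, 1 ≤ i → 1 ≤ j → ¬(a i = 0 ∧ b j = 0)) (ha : ∀ C, {i | a i ≤ C}.Finite)
    (hb : {j | 0 < b j}.Finite) {x : ℝ} (hx : 0 < x) : (degeneracySet a b ∩ Ici x).Finite := by
  refine (hb.biUnion fun j _ => (ha (b j / x)).image fun i => b j / a i).subset ?_
  rintro l ⟨⟨hl, i, j, hi, hj, -, hij⟩, hxl⟩
  obtain ⟨hai, hbj⟩ := (exists_pos_mul_eq_iff (ha₀ i hi) (hab i j hi hj)).mp ⟨l, hl, hij⟩
  have hl_eq : b j / a i = l := by rw [← hij, mul_div_cancel_left₀ l hai.ne']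
  refine mem_biUnion hbj ⟨i, ?_, hl_eq⟩
  show a i ≤ b j / x
  rw [le_div_iff₀ hx, ← hij]
  exact mul_le_mul_of_nonneg_left hxl hai.le

lemma degeneracySet_infinite (ha : StrictMonoOn a (Ici 1)) (ha₁ : 0 ≤ a 1) (hb₁ : 0 < b 1) :
    (degeneracySet a b).Infinite := by
  have hpos : ∀ n : ℕ, 0 < a (n + 2) := fun n =>
    ha₁.trans_lt (ha self_mem_Ici (by simp) (by omega))
  have hanti : StrictAnti fun n : ℕ => b 1 / a (n + 2) := fun n k hnk =>
    div_lt_div_of_pos_left hb₁ (hpos n) (ha (by simp) (by simp) (by omega))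
  refine infinite_of_injective_forall_mem hanti.injective fun n =>
    ⟨div_pos hb₁ (hpos n), n + 2, 1, by omega, le_rfl, by simp, ?_⟩
  exact mul_div_cancel₀ (b 1) (hpos n).ne'

end degeneracySet

lemma exists_isGreatest_of_finite_inter_Ici {α : Type*} [LinearOrder α] {T : Set α} {t₀ : α}
    (h₀ : t₀ ∈ T) (hfin : (T ∩ Ici t₀).Finite) : ∃ t, IsGreatest T t := by
  obtain ⟨t, ⟨htT, ht₀t⟩, hmax⟩ := exists_max_image (T ∩ Ici t₀) id hfin ⟨t₀, h₀, le_rfl⟩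
  refine ⟨t, htT, fun s hs => ?_⟩
  rcases le_total s t₀ with hst₀ | ht₀s
  · exact hst₀.trans ht₀t
  · exact hmax s ⟨hs, ht₀s⟩

lemma bddAbove_of_finite_inter_Ici {α : Type*} [LinearOrder α] {S : Set α} {x : α}
    (hfin : (S ∩ Ici x).Finite) : BddAbove S :=
  have : Nonempty α := ⟨x⟩
  (hfin.bddAbove.union bddAbove_Iic).mono fun s hs =>
    (le_total x s).imp (fun hxs => ⟨hs, hxs⟩) id

lemma exists_pos_le_abs_sub_of_finite_inter_Ici {S : Set ℝ} {x y : ℝ} (hyx : y < x)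
    (hfin : (S ∩ Ici y).Finite) : ∃ ε > 0, ∀ l ∈ S, l ≠ x → ε ≤ |l - x| := by
  let F : Set ℝ := (S ∩ Ici y) \ {x}
  have hxF : x ∈ Fᶜ := fun hx => hx.2 rfl
  obtain ⟨δ, hδ, hball⟩ :=
    Metric.isOpen_iff.mp (hfin.sdiff (t := {x})).isClosed.isOpen_compl x hxF
  refine ⟨min δ (x - y), lt_min hδ (sub_pos.mpr hyx), fun l hlS hlx => ?_⟩
  by_contra! hclose
  have hyl : y ≤ l := by linarith [neg_abs_le (l - x), min_le_right δ (x - y)]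
  have hlF : l ∈ F := ⟨⟨hlS, hyl⟩, hlx⟩
  exact hball (by rw [Metric.mem_ball, Real.dist_eq]; exact hclose.trans_le (min_le_left _ _)) hlF

lemma exists_isGreatest_inter_Iio {S : Set ℝ} (hpos : ∀ s ∈ S, 0 < s) (hinf : S.Infinite)
    (hfin : ∀ x > 0, (S ∩ Ici x).Finite) {x : ℝ} (hx : 0 < x) : ∃ t, IsGreatest (S ∩ Iio x) t := by
  obtain ⟨t₀, ht₀S, ht₀x⟩ := (hinf.sdiff (hfin x hx)).nonempty
  have ht₀ : t₀ ∈ S ∩ Iio x := ⟨ht₀S, mem_Iio.mpr (lt_of_not_ge fun h => ht₀x ⟨ht₀S, h⟩)⟩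
  exact exists_isGreatest_of_finite_inter_Ici ht₀
    ((hfin t₀ (hpos t₀ ht₀S)).subset fun s hs => ⟨hs.1.1, hs.2⟩)

lemma exists_strictAnti_tendsto_zero_range_eq {S : Set ℝ} (hpos : ∀ s ∈ S, 0 < s)
    (hinf : S.Infinite) (hfin : ∀ x > 0, (S ∩ Ici x).Finite) :
    ∃ v : ℕ → ℝ, StrictAnti v ∧ Tendsto v atTop (𝓝 0) ∧ S = range v := by
  choose! next hnext using fun x (hx : 0 < x) => exists_isGreatest_inter_Iio hpos hinf hfin hx
  obtain ⟨t₀, ht₀⟩ := exists_isGreatest_of_finite_inter_Ici hinf.nonempty.some_mem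
    (hfin _ (hpos _ hinf.nonempty.some_mem))
  let v : ℕ → ℝ := fun n => Nat.rec t₀ (fun _ y => next y) n
  have hvS : ∀ n, v n ∈ S := by
    intro n
    induction n with
    | zero => exact ht₀.1
    | succ k ih => exact (hnext _ (hpos _ ih)).1.1
  have hv_succ : ∀ n, IsGreatest (S ∩ Iio (v n)) (v (n + 1)) := fun n => hnext _ (hpos _ (hvS n))
  have hanti : StrictAnti v := strictAnti_nat_of_succ_lt fun n => (hv_succ n).1.2
  have hfin_ge : ∀ x > 0, {n | x ≤ v n}.Finite := fun x hx =>
    ((hfin x hx).preimage hanti.injective.injOn).subset fun n hn => ⟨hvS n, hn⟩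
  refine ⟨v, hanti, tendsto_order.mpr ⟨fun a ha => .of_forall fun n => ha.trans (hpos _ (hvS n)),
    fun a ha => ?_⟩, ?_⟩
  · rw [← Nat.cofinite_eq_atTop]
    exact (hfin_ge a ha).eventually_cofinite_notMem.mono fun n hn => not_le.mp hn
  refine Subset.antisymm (fun s hs => ?_) (range_subset_iff.mpr hvS)
  -- `s = v k` for the last `k` with `s ≤ v k`: `s` cannot lie strictly between `v (k + 1)` and `v k`
  obtain ⟨k, hsk, hmax⟩ := exists_isGreatest_of_finite_inter_Ici (T := {n | s ≤ v n}) (t₀ := 0)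
    (ht₀.2 hs) ((hfin_ge s (hpos s hs)).subset inter_subset_left)
  have hlt : v (k + 1) < s := not_le.mp fun h => (hmax h).not_gt k.lt_succ_self
  exact ⟨k, hsk.antisymm' (not_lt.mp fun h => hlt.not_ge ((hv_succ k).2 ⟨hs, h⟩))⟩

theorem stmt_11_general
    (m : ℕ) (hm : 3 ≤ m)
    (κ₀ κ₁ : ℝ)
    (ρ₀ ρ₁ : ℕ → ℝ)
    (hρ₀one : ρ₀ 1 = 0) (hρ₁one : ρ₁ 1 = 0)
    (hρ₀mono : ∀ i j : ℕ, 1 ≤ i → i < j → ρ₀ i < ρ₀ j)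
    (hρ₁mono : ∀ i j : ℕ, 1 ≤ i → i < j → ρ₁ i < ρ₁ j)
    (hρ₀unb : ∀ C : ℝ, ∃ i : ℕ, 1 ≤ i ∧ C < ρ₀ i)
    (σ : ℕ → ℕ → ℝ → ℝ)
    (hσ : ∀ (i j : ℕ) (l : ℝ), 0 < l →
      σ i j l = ρ₀ i + ρ₁ j / l - (κ₀ + κ₁ / l) / ((m : ℝ) - 1))
    (istar jstar : ℕ)
    (histar1 : 1 ≤ istar)
    (histar3 : ∀ i : ℕ, 1 ≤ i → i < istar → ρ₀ i < κ₀ / ((m : ℝ) - 1))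
    (hjstar1 : 1 ≤ jstar) (hjstar2 : κ₁ / ((m : ℝ) - 1) ≤ ρ₁ jstar)
    (hjstar3 : ∀ j : ℕ, 1 ≤ j → j < jstar → ρ₁ j < κ₁ / ((m : ℝ) - 1))
    (hnondeg : ¬ (ρ₀ istar = κ₀ / ((m : ℝ) - 1) ∧ ρ₁ jstar = κ₁ / ((m : ℝ) - 1)))
    (Λ : Set ℝ)
    (hΛ : Λ = {l : ℝ | 0 < l ∧ ∃ i j : ℕ, 1 ≤ i ∧ 1 ≤ j ∧ (i, j) ≠ (1, 1) ∧ σ i j l = 0})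
    (hκ₀ : κ₀ ≤ 0) (hκ₁ : 0 < κ₁) :
    (∀ i j : ℕ, 1 ≤ i → 1 ≤ j → (i, j) ≠ (1, 1) →
      ((∃ l : ℝ, 0 < l ∧ σ i j l = 0) ↔
        (κ₀ / ((m : ℝ) - 1) < ρ₀ i ∧ ρ₁ j < κ₁ / ((m : ℝ) - 1)))) ∧
    Λ.Infinite ∧ BddAbove Λ ∧
    (∀ x : ℝ, 0 < x → ∃ ε > (0 : ℝ), ∀ l ∈ Λ, l ≠ x → ε ≤ |l - x|) ∧
    (∃ v : ℕ → ℝ, StrictAnti v ∧ Filter.Tendsto v Filter.atTop (nhds 0) ∧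
      Λ = Set.range v) := by
  have hM : (0 : ℝ) < m - 1 := by linarith [show (3 : ℝ) ≤ m by exact_mod_cast hm]
  set c₀ := κ₀ / ((m : ℝ) - 1)
  set c₁ := κ₁ / ((m : ℝ) - 1)
  have hc₀ : c₀ ≤ 0 := div_nonpos_of_nonpos_of_nonneg hκ₀ hM.le
  have hρ₀ : StrictMonoOn ρ₀ (Ici 1) := fun i hi j _ hij => hρ₀mono i j hi hij
  have hρ₁ : StrictMonoOn ρ₁ (Ici 1) := fun i hi j _ hij => hρ₁mono i j hi hij
  set a : ℕ → ℝ := fun i => ρ₀ i - c₀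
  set b : ℕ → ℝ := fun j => c₁ - ρ₁ j
  have ha : StrictMonoOn a (Ici 1) := fun i hi j hj hij => sub_lt_sub_right (hρ₀ hi hj hij) c₀
  have ha₁ : 0 ≤ a 1 := by simpa [a, hρ₀one] using hc₀
  have ha₀ : ∀ i, 1 ≤ i → 0 ≤ a i := fun i hi => ha₁.trans (ha.monotoneOn self_mem_Ici hi hi)
  have hab : ∀ i j, 1 ≤ i → 1 ≤ j → ¬(a i = 0 ∧ b j = 0) := fun i j hi hj => by
    simpa only [a, b, sub_eq_zero, eq_comm (a := c₁)] using
      not_eq_and_eq_of_nondegenerate hρ₀.monotoneOn hρ₀one hc₀ histar1 histar3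
        hρ₁.monotoneOn hjstar1 hjstar2 hjstar3 hnondeg hi hj
  have hzero : ∀ i j l, 0 < l → (σ i j l = 0 ↔ a i * l = b j) := fun i j l hl => by
    rw [hσ i j l hl]
    exact eigenvalue_eq_zero_iff hM.ne' hl.ne'
  have hΛ' : Λ = degeneracySet a b :=
    hΛ.trans (ext fun l => and_congr_right fun hl => by simp only [hzero _ _ l hl])
  have hfin : ∀ x > 0, (Λ ∩ Ici x).Finite := fun x hx => hΛ' ▸
    degeneracySet_inter_Ici_finite ha₀ hab
      (fun C => by simpa only [a, sub_le_iff_le_add] using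
        finite_setOf_le_of_monotoneOn hρ₀.monotoneOn hρ₀unb (C + c₀))
      ((finite_Iio jstar).subset fun j hj => setOf_lt_subset_Iio hρ₁.monotoneOn hjstar1 hjstar2
        (show ρ₁ j < c₁ from sub_pos.mp hj)) hx
  have hb₁ : 0 < b 1 := by simpa [b, hρ₁one] using div_pos hκ₁ hM
  have hinf : Λ.Infinite := hΛ' ▸ degeneracySet_infinite ha ha₁ hb₁
  have hpos : ∀ l ∈ Λ, 0 < l := fun l hl => (hΛ' ▸ hl).1
  refine ⟨fun i j hi hj _ => ?_, hinf, bddAbove_of_finite_inter_Ici (hfin 1 one_pos),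
    fun x hx => exists_pos_le_abs_sub_of_finite_inter_Ici (half_lt_self hx) (hfin _ (half_pos hx)),
    exists_strictAnti_tendsto_zero_range_eq hpos hinf hfin⟩
  calc (∃ l, 0 < l ∧ σ i j l = 0) ↔ ∃ l, 0 < l ∧ a i * l = b j :=
        exists_congr fun l => and_congr_right (hzero i j l)
    _ ↔ 0 < a i ∧ 0 < b j := exists_pos_mul_eq_iff (ha₀ i hi) (hab i j hi hj)
    _ ↔ c₀ < ρ₀ i ∧ ρ₁ j < c₁ := by simp only [a, b, sub_pos]

theorem stmt_11
    (m : ℕ) (hm : 3 ≤ m)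
    (κ₀ κ₁ : ℝ)
    (ρ₀ ρ₁ : ℕ → ℝ)
    (hρ₀one : ρ₀ 1 = 0) (hρ₁one : ρ₁ 1 = 0)
    (hρ₀mono : ∀ i j : ℕ, 1 ≤ i → i < j → ρ₀ i < ρ₀ j)
    (hρ₁mono : ∀ i j : ℕ, 1 ≤ i → i < j → ρ₁ i < ρ₁ j)
    (hρ₀unb : ∀ C : ℝ, ∃ i : ℕ, 1 ≤ i ∧ C < ρ₀ i)
    (hρ₁unb : ∀ C : ℝ, ∃ j : ℕ, 1 ≤ j ∧ C < ρ₁ j)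
    (σ : ℕ → ℕ → ℝ → ℝ)
    (hσ : ∀ (i j : ℕ) (l : ℝ), 0 < l →
      σ i j l = ρ₀ i + ρ₁ j / l - (κ₀ + κ₁ / l) / ((m : ℝ) - 1))
    (istar jstar : ℕ)
    (histar1 : 1 ≤ istar) (histar2 : κ₀ / ((m : ℝ) - 1) ≤ ρ₀ istar)
    (histar3 : ∀ i : ℕ, 1 ≤ i → i < istar → ρ₀ i < κ₀ / ((m : ℝ) - 1))
    (hjstar1 : 1 ≤ jstar) (hjstar2 : κ₁ / ((m : ℝ) - 1) ≤ ρ₁ jstar)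
    (hjstar3 : ∀ j : ℕ, 1 ≤ j → j < jstar → ρ₁ j < κ₁ / ((m : ℝ) - 1))
    (hnondeg : ¬ (ρ₀ istar = κ₀ / ((m : ℝ) - 1) ∧ ρ₁ jstar = κ₁ / ((m : ℝ) - 1)))
    (Λ : Set ℝ)
    (hΛ : Λ = {l : ℝ | 0 < l ∧ ∃ i j : ℕ, 1 ≤ i ∧ 1 ≤ j ∧ (i, j) ≠ (1, 1) ∧ σ i j l = 0})
    (hκ₀ : κ₀ ≤ 0) (hκ₁ : 0 < κ₁) :
    (∀ i j : ℕ, 1 ≤ i → 1 ≤ j → (i, j) ≠ (1, 1) →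
      ((∃ l : ℝ, 0 < l ∧ σ i j l = 0) ↔
        (κ₀ / ((m : ℝ) - 1) < ρ₀ i ∧ ρ₁ j < κ₁ / ((m : ℝ) - 1)))) ∧
    Λ.Infinite ∧ BddAbove Λ ∧
    (∀ x : ℝ, 0 < x → ∃ ε > (0 : ℝ), ∀ l ∈ Λ, l ≠ x → ε ≤ |l - x|) ∧
    (∃ v : ℕ → ℝ, StrictAnti v ∧ Filter.Tendsto v Filter.atTop (nhds 0) ∧
      Λ = Set.range v) :=
  stmt_11_general m hm κ₀ κ₁ ρ₀ ρ₁ hρ₀one hρ₁one hρ₀mono hρ₁mono hρ₀unb σ hσ istar jstar histar1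
    histar3 hjstar1 hjstar2 hjstar3 hnondeg Λ hΛ hκ₀ hκ₁
end
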